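/- Let k be a field and O = k[[t^3,t^4]]. For all a, b ∈ k, the ideal I = (t^3 + a t^4 + b t^8, t^6 − a² t^8) of O has gap sequence G(I) = {0,4,8}, i.e. Γ(I) = {3+γ : γ ∈ Γ} = ⟨3⟩_Γ. -/

import Mathlib

/-!
Every element of `k[[t³, t⁴]]` has vanishing coefficients at `t`, `t²`, `t⁵`, so orders of its
nonzero elements lie in `Γ`. Writing `f = g F₁ + h F₂ ∈ I` with `g, h ∈ O` and comparing
coefficients gives `c₀(f) = 0`, `c₄(f) = a c₃(f)` and `c₈(f) = a c₇(f) - a² c₆(f) + b c₃(f)`,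
the coefficient `a²` of `F₂` being exactly what cancels the contribution of `h`. So no element
of `I` has order `0`, `4` or `8`, while `t^γ F₁ ∈ I` has order `3 + γ` for every `γ ∈ Γ`.
-/

open PowerSeries

section Supported

variable (R : Type*) [CommSemiring R]

def supportedSubalgebra (S : AddSubmonoid ℕ) : Subalgebra R R⟦X⟧ where
  carrier := {f | ∀ n ∉ S, coeff n f = 0}
  mul_mem' {f g} hf hg n hn := by
    rw [coeff_mul]
    refine Finset.sum_eq_zero fun p hp => ?_
    rw [Finset.HasAntidiagonal.mem_antidiagonal] at hp
    by_cases hp₁ : p.1 ∈ S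
    · have hp₂ : p.2 ∉ S := fun hp₂ => hn (hp ▸ S.add_mem hp₁ hp₂)
      rw [hg _ hp₂, mul_zero]
    · rw [hf _ hp₁, zero_mul]
  add_mem' hf hg n hn := by rw [map_add, hf n hn, hg n hn, add_zero]
  algebraMap_mem' r n hn := by
    rw [PowerSeries.algebraMap_apply, coeff_C, if_neg]
    rintro rfl
    exact hn S.zero_mem

variable {R}

theorem supportedSubalgebra.mem_of_order_eq {S : AddSubmonoid ℕ} {f : R⟦X⟧}
    (hf : f ∈ supportedSubalgebra R S) {n : ℕ} (hn : f.order = n) : n ∈ S :=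
  not_not.1 fun h => (order_eq_nat.1 hn).1 (hf n h)

theorem X_pow_mem_adjoin {s : Set ℕ} {n : ℕ} (hn : n ∈ AddSubmonoid.closure s) :
    (X : R⟦X⟧) ^ n ∈ Algebra.adjoin R ((X ^ ·) '' s) := by
  induction hn using AddSubmonoid.closure_induction with
  | mem m hm => exact Algebra.subset_adjoin ⟨m, hm, rfl⟩
  | zero => exact pow_zero (X : R⟦X⟧) ▸ one_mem _
  | add m n _ _ hm hn => exact pow_add (X : R⟦X⟧) m n ▸ mul_mem hm hn

theorem adjoin_le_supportedSubalgebra (s : Set ℕ) :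
    Algebra.adjoin R ((X ^ ·) '' s) ≤ supportedSubalgebra R (AddSubmonoid.closure s) := by
  refine Algebra.adjoin_le ?_
  rintro _ ⟨m, hm, rfl⟩ n hn
  rw [coeff_X_pow, if_neg]
  rintro rfl
  exact hn (AddSubmonoid.subset_closure hm)

end Supported

def numericalSemigroup34 : AddSubmonoid ℕ :=
  AddSubmonoid.closure {3, 4}

theorem mem_numericalSemigroup34 {m : ℕ} :
    m ∈ numericalSemigroup34 ↔ ∃ a b : ℕ, m = 3 * a + 4 * b := by
  simp only [numericalSemigroup34, AddSubmonoid.mem_closure_pair, smul_eq_mul, eq_comm, mul_comm]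

theorem mem_numericalSemigroup34_iff_ne {m : ℕ} :
    m ∈ numericalSemigroup34 ↔ m ≠ 1 ∧ m ≠ 2 ∧ m ≠ 5 := by
  rw [mem_numericalSemigroup34]
  constructor
  · rintro ⟨a, b, rfl⟩
    omega
  · intro h
    exact ⟨(m - 4 * (m % 3)) / 3, m % 3, by omega⟩

theorem numericalSemigroup34_diff_three_add :
    (numericalSemigroup34 : Set ℕ) \ {n | ∃ γ ∈ numericalSemigroup34, n = 3 + γ} =
      {0, 4, 8} := by
  ext n
  simp only [Set.mem_sdiff, SetLike.mem_coe, Set.mem_ofPred_eq, Set.mem_insert_iff,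
    Set.mem_singleton_iff, mem_numericalSemigroup34_iff_ne]
  constructor
  · rintro ⟨hn, hn_three_add⟩
    by_contra h
    exact hn_three_add ⟨n - 3, by omega, by omega⟩
  · intro h
    refine ⟨by omega, ?_⟩
    rintro ⟨γ, hγ, rfl⟩
    omega

section Generators

variable {R : Type*} [CommRing R] {a b : R}

theorem coeff_eq_zero_of_mem_numericalSemigroup34 {g : R⟦X⟧}
    (hg : g ∈ supportedSubalgebra R numericalSemigroup34) :
    coeff 1 g = 0 ∧ coeff 2 g = 0 ∧ coeff 5 g = 0 := by
  refine ⟨hg 1 ?_, hg 2 ?_, hg 5 ?_⟩ <;> simp [mem_numericalSemigroup34_iff_ne]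

theorem coeff_relations {f g h : R⟦X⟧}
    (hg : g ∈ supportedSubalgebra R numericalSemigroup34)
    (hh : h ∈ supportedSubalgebra R numericalSemigroup34)
    (hf : f = g * (X ^ 3 + C a * X ^ 4 + C b * X ^ 8) + h * (X ^ 6 - C (a ^ 2) * X ^ 8)) :
    coeff 0 f = 0 ∧ coeff 4 f = a * coeff 3 f ∧
      coeff 8 f = a * coeff 7 f - a ^ 2 * coeff 6 f + b * coeff 3 f := by
  obtain ⟨g₁, g₂, g₅⟩ := coeff_eq_zero_of_mem_numericalSemigroup34 hg
  obtain ⟨h₁, h₂, -⟩ := coeff_eq_zero_of_mem_numericalSemigroup34 hh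
  replace hf : f = g * X ^ 3 + C a * (g * X ^ 4) + C b * (g * X ^ 8) + h * X ^ 6
      - C (a ^ 2) * (h * X ^ 8) := by rw [hf]; ring
  subst hf
  simp only [map_add, map_sub, coeff_C_mul, coeff_mul_X_pow']
  norm_num [g₁, g₂, g₅, h₁, h₂]
  ring

theorem exists_eq_three_add_of_order_eq {f g h : R⟦X⟧}
    (hf_mem : f ∈ supportedSubalgebra R numericalSemigroup34)
    (hg : g ∈ supportedSubalgebra R numericalSemigroup34)
    (hh : h ∈ supportedSubalgebra R numericalSemigroup34)
    (hf : f = g * (X ^ 3 + C a * X ^ 4 + C b * X ^ 8) + h * (X ^ 6 - C (a ^ 2) * X ^ 8))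
    {n : ℕ} (hn : f.order = n) : ∃ γ ∈ numericalSemigroup34, n = 3 + γ := by
  obtain ⟨c₀, c₄, c₈⟩ := coeff_relations hg hh hf
  obtain ⟨hcn, hlow⟩ := order_eq_nat.1 hn
  have hn_mem := mem_numericalSemigroup34_iff_ne.1 (supportedSubalgebra.mem_of_order_eq hf_mem hn)
  have hn₀ : n ≠ 0 := by
    rintro rfl
    exact hcn c₀
  have hn₄ : n ≠ 4 := by
    rintro rfl
    exact hcn (by rw [c₄, hlow 3 (by norm_num), mul_zero])
  have hn₈ : n ≠ 8 := by
    rintro rfl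
    exact hcn (by rw [c₈, hlow 3 (by norm_num), hlow 6 (by norm_num), hlow 7 (by norm_num)]; ring)
  exact ⟨n - 3, mem_numericalSemigroup34_iff_ne.2 (by omega), by omega⟩

theorem X_pow_mem_adjoin_pair {n : ℕ} (hn : n ∈ numericalSemigroup34) :
    (X : R⟦X⟧) ^ n ∈ Algebra.adjoin R {X ^ 3, X ^ 4} := by
  simpa [Set.image_pair] using X_pow_mem_adjoin (R := R) hn

theorem adjoin_pair_le_supportedSubalgebra :
    Algebra.adjoin R {(X : R⟦X⟧) ^ 3, X ^ 4} ≤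
      supportedSubalgebra R numericalSemigroup34 := by
  simpa [Set.image_pair, numericalSemigroup34] using adjoin_le_supportedSubalgebra (R := R) {3, 4}

theorem generator_mem_adjoin_pair :
    X ^ 3 + C a * X ^ 4 + C b * X ^ 8 ∈ Algebra.adjoin R {(X : R⟦X⟧) ^ 3, X ^ 4} := by
  simp only [← smul_eq_C_mul]
  refine add_mem (add_mem (X_pow_mem_adjoin_pair ?_)
    (Subalgebra.smul_mem _ (X_pow_mem_adjoin_pair ?_) a))
    (Subalgebra.smul_mem _ (X_pow_mem_adjoin_pair ?_) b) <;>
    simp [mem_numericalSemigroup34_iff_ne]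

theorem order_generator [Nontrivial R] :
    (X ^ 3 + C a * X ^ 4 + C b * X ^ 8 : R⟦X⟧).order = 3 := by
  refine order_eq_nat.2 ⟨by simp [coeff_X_pow, coeff_C_mul], fun i hi => ?_⟩
  interval_cases i <;> simp [coeff_X_pow, coeff_C_mul]

theorem order_X_pow_mul_generator [IsDomain R] (γ : ℕ) :
    (X ^ γ * (X ^ 3 + C a * X ^ 4 + C b * X ^ 8) : R⟦X⟧).order = (3 + γ : ℕ) := by
  rw [order_mul, order_X_pow, order_generator, add_comm]
  norm_cast

end Generators

theorem gap_sequence_S33_E6 {k : Type*} [Field k]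
    (O : Subalgebra k (PowerSeries k))
    (hO : O = Algebra.adjoin k {(X : PowerSeries k) ^ 3, (X : PowerSeries k) ^ 4})
    (a b : k) (I : Ideal O)
    (hI : ∀ f : O, f ∈ I ↔ ∃ g h : O,
      (f : PowerSeries k) =
        (g : PowerSeries k) * (X ^ 3 + C a * X ^ 4 + C b * X ^ 8) +
        (h : PowerSeries k) * (X ^ 6 - C (a ^ 2) * X ^ 8)) :
    ({m : ℕ | ∃ a b : ℕ, m = 3 * a + 4 * b} \
      {n : ℕ | ∃ f ∈ I, f ≠ 0 ∧ (f : PowerSeries k).order = n}) = {0, 4, 8} ∧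
    {n : ℕ | ∃ f ∈ I, f ≠ 0 ∧ (f : PowerSeries k).order = n} =
      {n : ℕ | ∃ γ ∈ {m : ℕ | ∃ a b : ℕ, m = 3 * a + 4 * b}, n = 3 + γ} := by
  subst hO
  have hO_supp := adjoin_pair_le_supportedSubalgebra (R := k)
  have orders : {n : ℕ | ∃ f ∈ I, f ≠ 0 ∧ (f : PowerSeries k).order = n} =
      {n : ℕ | ∃ γ ∈ numericalSemigroup34, n = 3 + γ} := by
    ext n
    constructor
    · rintro ⟨f, hfI, -, hn⟩
      obtain ⟨g, h, hf⟩ := (hI f).1 hfI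
      exact exists_eq_three_add_of_order_eq (hO_supp f.2) (hO_supp g.2) (hO_supp h.2) hf hn
    · rintro ⟨γ, hγ, rfl⟩
      have hXγ := X_pow_mem_adjoin_pair (R := k) hγ
      have hord := order_X_pow_mul_generator (a := a) (b := b) γ
      refine ⟨⟨_, mul_mem hXγ generator_mem_adjoin_pair⟩, (hI _).2 ⟨⟨_, hXγ⟩, 0, by simp⟩,
        fun h => order_finite_iff_ne_zero.1 ?_ (congrArg Subtype.val h), hord⟩
      rw [hord]
      exact ENat.natCast_lt_top _
  have hΓ : {m : ℕ | ∃ a b : ℕ, m = 3 * a + 4 * b} = numericalSemigroup34 :=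
    Set.ext fun _ => mem_numericalSemigroup34.symm
  rw [hΓ, orders]
  exact ⟨numericalSemigroup34_diff_three_add, rfl⟩
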